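/- Let 0 < s < 1, let α > 4, define η(x) = (1+‖x‖²)^{-α/2} for x ∈ ℝ² and η_R(x) = η(x/R) for R ≥ 1. For each R ≥ 1 and x ∈ ℝ² the integral F_R(x) = ∫_{ℝ²} (η_R(x+y) + η_R(x-y) - 2·η_R(x)) / ‖y‖^{2+2s} dy converges absolutely, and the supremum over x ∈ ℝ² of |F_R(x)| tends to 0 as R → ∞. -/

import Mathlib

open MeasureTheory Filter Real

noncomputable def eta (α : ℝ) (x : EuclideanSpace ℝ (Fin 2)) : ℝ :=
  (1 + ‖x‖ ^ 2) ^ (-(α / 2))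

noncomputable def etaR (α R : ℝ) (x : EuclideanSpace ℝ (Fin 2)) : ℝ :=
  eta α (R⁻¹ • x)

noncomputable def FR (s α R : ℝ) (x : EuclideanSpace ℝ (Fin 2)) : ℝ :=
  ∫ y : EuclideanSpace ℝ (Fin 2),
    (etaR α R (x + y) + etaR α R (x - y) - 2 * etaR α R x) / ‖y‖ ^ (2 + 2 * s)

/-!
The numerator of `FR` is the symmetric second difference of `η_R`. Since `η` has bounded
Hessian and `0 < η ≤ 1`, it is at most `min (C ‖y‖² / R²) 2`, and against the kernel
`‖y‖^(-2-2s)` this is integrable near `0` because `s < 1` and near infinity because `s > 0`.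
For the decay, the change of variables `y = R z` gives the exact scaling
`F_R(x) = R^(-2s) F_1(x / R)`, so `sup |F_R| = R^(-2s) sup |F_1|` with `sup |F_1|` finite.
-/

theorem abs_second_diff_le_of_norm_fderiv_fderiv_le {E : Type*} [NormedAddCommGroup E] [NormedSpace ℝ E]
    {f : E → ℝ} {M : ℝ} (hf : Differentiable ℝ f) (hf' : Differentiable ℝ (fderiv ℝ f))
    (hf'' : ∀ x, ‖fderiv ℝ (fderiv ℝ f) x‖ ≤ M) (x y : E) :
    |f (x + y) + f (x - y) - 2 * f x| ≤ 2 * M * ‖y‖ ^ 2 := by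
  have hM : 0 ≤ M := (norm_nonneg (fderiv ℝ (fderiv ℝ f) x)).trans (hf'' x)
  have hlip (a b : E) : ‖fderiv ℝ f a - fderiv ℝ f b‖ ≤ M * ‖a - b‖ :=
    convex_univ.norm_image_sub_le_of_norm_hasFDerivWithin_le
      (fun z _ => (hf' z).hasFDerivAt.hasFDerivWithinAt) (fun z _ => hf'' z) trivial trivial
  set φ : ℝ → ℝ := fun t => f (x + t • y) + f (x - t • y)
  have hφ (t : ℝ) : HasDerivAt φ (fderiv ℝ f (x + t • y) y - fderiv ℝ f (x - t • y) y) t := by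
    have hp : HasDerivAt (fun t : ℝ => x + t • y) y t := by
      simpa using ((hasDerivAt_id t).smul_const y).const_add x
    have hm : HasDerivAt (fun t : ℝ => x - t • y) (-y) t := by
      simpa using ((hasDerivAt_id t).smul_const y).const_sub x
    simpa [φ, sub_eq_add_neg] using
      ((hf _).hasFDerivAt.comp_hasDerivAt t hp).fun_add ((hf _).hasFDerivAt.comp_hasDerivAt t hm)
  have hbound : ∀ t ∈ Set.Ico (0 : ℝ) 1,
      ‖fderiv ℝ f (x + t • y) y - fderiv ℝ f (x - t • y) y‖ ≤ 2 * M * ‖y‖ ^ 2 := by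
    intro t ⟨ht0, ht1⟩
    have hdiff : (x + t • y) - (x - t • y) = (2 * t) • y := by module
    calc ‖fderiv ℝ f (x + t • y) y - fderiv ℝ f (x - t • y) y‖
        = ‖(fderiv ℝ f (x + t • y) - fderiv ℝ f (x - t • y)) y‖ := rfl
      _ ≤ M * ‖(2 * t) • y‖ * ‖y‖ := by
          grw [ContinuousLinearMap.le_opNorm, hlip, hdiff]
      _ = 2 * M * ‖y‖ ^ 2 * t := by
          rw [norm_smul, Real.norm_of_nonneg (by positivity)]; ring
      _ ≤ 2 * M * ‖y‖ ^ 2 := mul_le_of_le_one_right (by positivity) ht1.le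
  have := norm_image_sub_le_of_norm_deriv_le_segment_01' (fun t _ => (hφ t).hasDerivWithinAt)
    hbound
  simpa [φ, two_mul, add_sub_assoc, sub_sub] using this

section OneAddNormSqRpow

variable {E : Type*} [NormedAddCommGroup E] [InnerProductSpace ℝ E] (p : ℝ)

theorem hasFDerivAt_one_add_norm_sq_rpow (x : E) :
    HasFDerivAt (fun x : E => (1 + ‖x‖ ^ 2) ^ p)
      ((2 * p * (1 + ‖x‖ ^ 2) ^ (p - 1)) • innerSL ℝ x) x := by
  have h := ((hasStrictFDerivAt_norm_sq x).hasFDerivAt.const_add 1).rpow_const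
    (p := p) (Or.inl (by positivity))
  convert h using 1
  ext v
  simp
  ring

theorem fderiv_one_add_norm_sq_rpow :
    fderiv ℝ (fun x : E => (1 + ‖x‖ ^ 2) ^ p) =
      fun x => (2 * p * (1 + ‖x‖ ^ 2) ^ (p - 1)) • innerSL ℝ x :=
  funext fun x => (hasFDerivAt_one_add_norm_sq_rpow p x).fderiv

theorem hasFDerivAt_fderiv_one_add_norm_sq_rpow (x : E) :
    HasFDerivAt (𝕜 := ℝ) (fderiv ℝ (fun x : E => (1 + ‖x‖ ^ 2) ^ p))
      (((2 * p * (1 + ‖x‖ ^ 2) ^ (p - 1)) • innerSL ℝ : E →L[ℝ] E →L[ℝ] ℝ) +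
        ((2 * p) • (2 * (p - 1) * (1 + ‖x‖ ^ 2) ^ (p - 1 - 1)) • innerSL ℝ x).smulRight
          (innerSL ℝ x)) x := by
  rw [fderiv_one_add_norm_sq_rpow]
  have hc := (hasFDerivAt_one_add_norm_sq_rpow (p - 1) x).const_mul (2 * p)
  exact hc.fun_smul (innerSL ℝ (E := E)).hasFDerivAt

theorem norm_fderiv_fderiv_one_add_norm_sq_rpow_le (hp : p ≤ 1) (x : E) :
    ‖fderiv ℝ (fderiv ℝ (fun x : E => (1 + ‖x‖ ^ 2) ^ p)) x‖ ≤ 2 * |p| + 4 * |p| * |p - 1| := by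
  rw [(hasFDerivAt_fderiv_one_add_norm_sq_rpow p x).fderiv]
  set ρ := 1 + ‖x‖ ^ 2
  have hρ : 1 ≤ ρ := by simp only [ρ]; nlinarith [sq_nonneg ‖x‖]
  have hρ1 : ρ ^ (p - 1) ≤ 1 := rpow_le_one_of_one_le_of_nonpos hρ (by linarith)
  have hρ2 : ρ ^ (p - 1 - 1) * ‖x‖ ^ 2 ≤ 1 :=
    calc ρ ^ (p - 1 - 1) * ‖x‖ ^ 2 ≤ ρ ^ (p - 1 - 1) * ρ := by gcongr; simp [ρ]
      _ = ρ ^ (p - 1) := by rw [← rpow_add_one (by positivity)]; ring_nf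
      _ ≤ 1 := hρ1
  have hρ0 : 0 ≤ ρ ^ (p - 1 - 1) := by positivity
  refine ContinuousLinearMap.opNorm_le_bound₂ _ (by positivity) fun u v => ?_
  change |2 * p * ρ ^ (p - 1) * inner ℝ u v +
    2 * p * (2 * (p - 1) * ρ ^ (p - 1 - 1) * inner ℝ x u) * inner ℝ x v| ≤ _
  have huv := abs_real_inner_le_norm u v
  have hxu := abs_real_inner_le_norm x u
  have hxv := abs_real_inner_le_norm x v
  calc _ ≤ |2 * p * ρ ^ (p - 1)| * |inner ℝ u v| +
        |2 * p| * |2 * (p - 1)| * ρ ^ (p - 1 - 1) * (|inner ℝ x u| * |inner ℝ x v|) := by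
        refine (abs_add_le _ _).trans_eq ?_
        simp only [abs_mul, abs_of_nonneg hρ0]
        ring
    _ ≤ 2 * |p| * 1 * (‖u‖ * ‖v‖) +
        |2 * p| * |2 * (p - 1)| * ρ ^ (p - 1 - 1) * ((‖x‖ * ‖u‖) * (‖x‖ * ‖v‖)) := by
        rw [abs_mul, abs_mul, abs_two, abs_of_nonneg (by positivity : 0 ≤ ρ ^ (p - 1))]
        gcongr
    _ = 2 * |p| * (‖u‖ * ‖v‖) +
        4 * |p| * |p - 1| * (ρ ^ (p - 1 - 1) * ‖x‖ ^ 2) * (‖u‖ * ‖v‖) := by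
        rw [abs_mul, abs_mul, abs_two]; ring
    _ ≤ 2 * |p| * (‖u‖ * ‖v‖) + 4 * |p| * |p - 1| * 1 * (‖u‖ * ‖v‖) := by gcongr
    _ = (2 * |p| + 4 * |p| * |p - 1|) * ‖u‖ * ‖v‖ := by ring

end OneAddNormSqRpow

section Majorant

variable {E : Type*} [NormedAddCommGroup E] [NormedSpace ℝ E] [MeasurableSpace E] [BorelSpace E]
  [FiniteDimensional ℝ E] [Nontrivial E] (μ : Measure E) [μ.IsAddHaarMeasure]

theorem integrable_min_mul_norm_sq_div_rpow {s c b : ℝ} (hs0 : 0 < s) (hs1 : s < 1) (hc : 0 ≤ c)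
    (hb : 0 ≤ b) :
    Integrable (fun y : E => min (c * ‖y‖ ^ 2) b / ‖y‖ ^ ((Module.finrank ℝ E : ℝ) + 2 * s)) μ := by
  refine (integrable_fun_norm_addHaar μ
    (f := fun r => min (c * r ^ 2) b / r ^ ((Module.finrank ℝ E : ℝ) + 2 * s))).2 ?_
  have hmeas : AEStronglyMeasurable (fun r : ℝ => r ^ (Module.finrank ℝ E - 1) •
      (min (c * r ^ 2) b / r ^ ((Module.finrank ℝ E : ℝ) + 2 * s))) := by
    fun_prop
  have hprofile {r : ℝ} (hr : 0 < r) : r ^ (Module.finrank ℝ E - 1) •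
      (min (c * r ^ 2) b / r ^ ((Module.finrank ℝ E : ℝ) + 2 * s)) =
        min (c * r ^ 2) b * r ^ (-1 - 2 * s) := by
    rw [smul_eq_mul, ← rpow_natCast, Nat.cast_sub Module.finrank_pos, mul_div_left_comm,
      ← rpow_sub hr]
    ring_nf
  rw [← Set.Ioc_union_Ioi_eq_Ioi zero_le_one]
  refine IntegrableOn.union ?_ ?_
  · have hg : IntegrableOn (fun r : ℝ => c * r ^ (1 - 2 * s)) (Set.Ioc 0 1) :=
      (intervalIntegral.intervalIntegrable_rpow' (by linarith)).1.const_mul c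
    refine hg.mono' hmeas.restrict ((ae_restrict_mem measurableSet_Ioc).mono fun r hr => ?_)
    have hr0 : 0 < r := hr.1
    rw [hprofile hr0, Real.norm_of_nonneg (by positivity)]
    calc min (c * r ^ 2) b * r ^ (-1 - 2 * s) ≤ c * r ^ 2 * r ^ (-1 - 2 * s) := by
          gcongr; exact min_le_left _ _
      _ = c * r ^ (1 - 2 * s) := by
          rw [mul_assoc, ← rpow_natCast, ← rpow_add hr0]; ring_nf
  · have hg : IntegrableOn (fun r : ℝ => b * r ^ (-1 - 2 * s)) (Set.Ioi 1) :=
      (integrableOn_Ioi_rpow_of_lt (by linarith) one_pos).const_mul b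
    refine hg.mono' hmeas.restrict ((ae_restrict_mem measurableSet_Ioi).mono fun r hr => ?_)
    have hr0 : 0 < r := one_pos.trans hr
    rw [hprofile hr0, Real.norm_of_nonneg (by positivity)]
    gcongr
    exact min_le_right _ _

end Majorant

local notation "ℝ²" => EuclideanSpace ℝ (Fin 2)

theorem eta_pos (α : ℝ) (x : ℝ²) : 0 < eta α x :=
  rpow_pos_of_pos (by positivity) _

theorem eta_le_one {α : ℝ} (hα : 0 ≤ α) (x : ℝ²) : eta α x ≤ 1 :=
  rpow_le_one_of_one_le_of_nonpos (by nlinarith [sq_nonneg ‖x‖]) (by linarith)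

theorem exists_abs_eta_second_diff_le {α : ℝ} (hα : 0 ≤ α) :
    ∃ C, 0 ≤ C ∧ ∀ x y : ℝ²,
      |eta α (x + y) + eta α (x - y) - 2 * eta α x| ≤ min (C * ‖y‖ ^ 2) 2 := by
  set p := -(α / 2)
  have hp : p ≤ 1 := by simp only [p]; linarith
  refine ⟨2 * (2 * |p| + 4 * |p| * |p - 1|), by positivity, fun x y => le_min ?_ ?_⟩
  · exact abs_second_diff_le_of_norm_fderiv_fderiv_le
      (fun x => (hasFDerivAt_one_add_norm_sq_rpow p x).differentiableAt)
      (fun x => (hasFDerivAt_fderiv_one_add_norm_sq_rpow p x).differentiableAt)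
      (norm_fderiv_fderiv_one_add_norm_sq_rpow_le p hp) x y
  · rw [abs_le]
    constructor <;> linarith [eta_pos α (x + y), eta_pos α (x - y), eta_pos α x,
      eta_le_one hα (x + y), eta_le_one hα (x - y), eta_le_one hα x]

theorem etaR_one (α : ℝ) : etaR α 1 = eta α := by
  ext x; simp [etaR]

theorem FR_eq_rpow_mul_FR_one (s α : ℝ) {R : ℝ} (hR : 0 < R) (x : ℝ²) :
    FR s α R x = R ^ (-(2 * s)) * FR s α 1 (R⁻¹ • x) := by
  have hscale := Measure.integral_comp_smul (volume : Measure ℝ²)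
    (fun y => (etaR α R (x + y) + etaR α R (x - y) - 2 * etaR α R x) / ‖y‖ ^ (2 + 2 * s)) R
  have hintegrand (z : ℝ²) :
      (etaR α R (x + R • z) + etaR α R (x - R • z) - 2 * etaR α R x) / ‖R • z‖ ^ (2 + 2 * s) =
        R ^ (-(2 + 2 * s)) * ((eta α (R⁻¹ • x + z) + eta α (R⁻¹ • x - z) - 2 * eta α (R⁻¹ • x)) /
          ‖z‖ ^ (2 + 2 * s)) := by
    simp only [etaR, smul_add, smul_sub, smul_smul, inv_mul_cancel₀ hR.ne', one_smul, norm_smul,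
      Real.norm_of_nonneg hR.le, mul_rpow hR.le (norm_nonneg z), rpow_neg hR.le]
    ring
  simp only [hintegrand, integral_const_mul, finrank_euclideanSpace_fin] at hscale
  rw [abs_of_pos (by positivity), smul_eq_mul] at hscale
  have hpow : R ^ (-(2 * s)) = R ^ 2 * R ^ (-(2 + 2 * s)) := by
    rw [← rpow_natCast, ← rpow_add hR]; norm_num
  rw [FR, FR, etaR_one, hpow, mul_assoc, hscale, ← mul_assoc, mul_inv_cancel₀ (by positivity),
    one_mul]

theorem integrable_min_mul_norm_sq_div_rpow_two_add {s c : ℝ} (hs0 : 0 < s) (hs1 : s < 1)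
    (hc : 0 ≤ c) : Integrable (fun y : ℝ² => min (c * ‖y‖ ^ 2) 2 / ‖y‖ ^ (2 + 2 * s)) := by
  simpa [finrank_euclideanSpace_fin] using
    integrable_min_mul_norm_sq_div_rpow (volume : Measure ℝ²) hs0 hs1 hc zero_le_two

theorem norm_FR_integrand_le {s α C : ℝ}
    (hC : ∀ x y : ℝ², |eta α (x + y) + eta α (x - y) - 2 * eta α x| ≤ min (C * ‖y‖ ^ 2) 2)
    (R : ℝ) (x y : ℝ²) :
    ‖(etaR α R (x + y) + etaR α R (x - y) - 2 * etaR α R x) / ‖y‖ ^ (2 + 2 * s)‖ ≤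
      min (C * R⁻¹ ^ 2 * ‖y‖ ^ 2) 2 / ‖y‖ ^ (2 + 2 * s) := by
  have hy : 0 ≤ ‖y‖ ^ (2 + 2 * s) := rpow_nonneg (norm_nonneg y) _
  rw [Real.norm_eq_abs, abs_div, abs_of_nonneg hy]
  refine div_le_div_of_nonneg_right ?_ hy
  simpa [etaR, smul_add, smul_sub, norm_smul, mul_pow, mul_assoc] using hC (R⁻¹ • x) (R⁻¹ • y)

theorem integrable_FR_integrand {s α : ℝ} (hs0 : 0 < s) (hs1 : s < 1) (hα : 0 ≤ α) (R : ℝ)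
    (x : ℝ²) :
    Integrable (fun y : ℝ² =>
      (etaR α R (x + y) + etaR α R (x - y) - 2 * etaR α R x) / ‖y‖ ^ (2 + 2 * s)) := by
  obtain ⟨C, hC0, hC⟩ := exists_abs_eta_second_diff_le hα
  refine (integrable_min_mul_norm_sq_div_rpow_two_add hs0 hs1 (c := C * R⁻¹ ^ 2)
    (by positivity)).mono' ?_ (ae_of_all _ (norm_FR_integrand_le hC R x))
  simp only [etaR, eta]
  exact Measurable.aestronglyMeasurable (by fun_prop)

theorem exists_forall_abs_FR_one_le {s α : ℝ} (hs0 : 0 < s) (hs1 : s < 1) (hα : 0 ≤ α) :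
    ∃ M, ∀ x, |FR s α 1 x| ≤ M := by
  obtain ⟨C, hC0, hC⟩ := exists_abs_eta_second_diff_le hα
  refine ⟨∫ y : ℝ², min (C * 1⁻¹ ^ 2 * ‖y‖ ^ 2) 2 / ‖y‖ ^ (2 + 2 * s), fun x => ?_⟩
  exact norm_integral_le_of_norm_le (integrable_min_mul_norm_sq_div_rpow_two_add hs0 hs1
    (by positivity)) (ae_of_all _ (norm_FR_integrand_le hC 1 x))

theorem stmt_0 (s α : ℝ) (hs0 : 0 < s) (hs1 : s < 1) (hα : 4 < α) :
    (∀ R : ℝ, 1 ≤ R → ∀ x : EuclideanSpace ℝ (Fin 2),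
      Integrable (fun y : EuclideanSpace ℝ (Fin 2) =>
        (etaR α R (x + y) + etaR α R (x - y) - 2 * etaR α R x) / ‖y‖ ^ (2 + 2 * s))) ∧
    Tendsto (fun R : ℝ => ⨆ x : EuclideanSpace ℝ (Fin 2), |FR s α R x|)
      atTop (nhds 0) := by
  have hα0 : 0 ≤ α := by linarith
  obtain ⟨M, hM⟩ := exists_forall_abs_FR_one_le hs0 hs1 hα0
  refine ⟨fun R _ x => integrable_FR_integrand hs0 hs1 hα0 R x, ?_⟩
  have hdecay : Tendsto (fun R : ℝ => R ^ (-(2 * s)) * M) atTop (nhds 0) := by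
    simpa using (tendsto_rpow_neg_atTop (by linarith : 0 < 2 * s)).mul_const M
  refine tendsto_of_tendsto_of_tendsto_of_le_of_le' tendsto_const_nhds hdecay
    (Eventually.of_forall fun R => Real.iSup_nonneg fun x => abs_nonneg _) ?_
  filter_upwards [eventually_gt_atTop 0] with R hR
  refine Real.iSup_le (fun x => ?_) (mul_nonneg (by positivity) ((abs_nonneg _).trans (hM 0)))
  rw [FR_eq_rpow_mul_FR_one s α hR, abs_mul, abs_of_pos (by positivity)]
  exact mul_le_mul_of_nonneg_left (hM _) (by positivity)
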